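/- (Weights remain in {-1,0,1}) Let X_0 = σ + Σ_{τ ∈ S_{k+1}^+} λ_τ ∂_{k+1}τ with all λ_τ ∈ {-1,0,1}, and suppose every (k+1)-simplex τ satisfies deg_↓(τ) ≤ k + 2 - |⟨∂_{k+1}τ, σ⟩|, where deg_↓(τ) = Σ_{τ' ≠ τ} |⟨∂_{k+1}τ, ∂_{k+1}τ'⟩|. Then after one step of the cycle-valued random walk (subtracting ∂_{k+1}η for some η with ⟨∂_{k+1}η, X_0⟩ > 0), the new state can again be written as σ + Σ_τ λ'_τ ∂_{k+1}τ with all λ'_τ ∈ {-1,0,1}. In particular the state space of the walk is finite. -/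
import Mathlib


open scoped RealInnerProductSpace

/-- Weights remain in `{-1,0,1}` after one step of the cycle-valued random walk.  `E` is
the Hilbert space of `k`-chains, `S` indexes the (finitely many) positively oriented
`(k+1)`-simplexes and `bd τ = ∂_{k+1} τ`, whose squared norm is `k+2`.  The lower degree
is `deg_↓(τ) = ∑_{τ' ≠ τ} |⟨∂_{k+1}τ, ∂_{k+1}τ'⟩|`.  If
`X₀ = σ + ∑_τ λ_τ ∂_{k+1}τ` with all `λ_τ ∈ {-1,0,1}`, if
`deg_↓(τ) ≤ k + 2 - |⟨∂_{k+1}τ, σ⟩|` for every `τ`, and if the walk jumps by subtracting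
the boundary `ε • ∂_{k+1}η` of an oriented simplex (sign `ε = ±1`) with positive rate
`⟨ε • ∂_{k+1}η, X₀⟩ > 0`, then the new state again has all weights in `{-1,0,1}`. -/
theorem weights_remain_simple
    {E : Type*} [NormedAddCommGroup E] [InnerProductSpace ℝ E]
    {S : Type*} [Fintype S] [DecidableEq S] (bd : S → E) (k : ℕ)
    (hbd : ∀ τ : S, ‖bd τ‖ ^ 2 = (k : ℝ) + 2)
    (σ : E) (lam : S → ℝ) (hlam : ∀ τ, lam τ ∈ ({-1, 0, 1} : Set ℝ))
    (hdeg : ∀ τ : S, (∑ τ' ∈ Finset.univ.erase τ, |⟪bd τ, bd τ'⟫|)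
        ≤ (k : ℝ) + 2 - |⟪bd τ, σ⟫|)
    (X0 : E) (hX0 : X0 = σ + ∑ τ : S, lam τ • bd τ)
    (η : S) (ε : ℝ) (hε : ε = 1 ∨ ε = -1)
    (hjump : 0 < ⟪ε • bd η, X0⟫) :
    ∃ lam' : S → ℝ, (∀ τ, lam' τ ∈ ({-1, 0, 1} : Set ℝ)) ∧
      X0 - ε • bd η = σ + ∑ τ : S, lam' τ • bd τ := by
  have hε2 : ε * ε = 1 := by rcases hε with h | h <;> simp [h]
  -- key: lam η ≠ -ε
  have hkey : lam η ≠ -ε := by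
    intro hne
    -- compute the inner product
    have hcalc : ⟪ε • bd η, X0⟫ =
        ε * ⟪bd η, σ⟫ + ε * lam η * ‖bd η‖ ^ 2
          + ∑ τ' ∈ Finset.univ.erase η, ε * lam τ' * ⟪bd η, bd τ'⟫ := by
      rw [hX0, real_inner_smul_left, inner_add_right, inner_sum]
      rw [← Finset.add_sum_erase _ (fun τ' => ⟪bd η, lam τ' • bd τ'⟫) (Finset.mem_univ η)]
      simp only [real_inner_smul_right, real_inner_self_eq_norm_sq]
      rw [mul_add, mul_add, Finset.mul_sum, ← add_assoc, ← mul_assoc]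
      exact congrArg _ (Finset.sum_congr rfl fun x _ => by ring)
    have h1 : ε * lam η * ‖bd η‖ ^ 2 = -((k : ℝ) + 2) := by
      rw [hne, hbd η]; nlinarith
    have h2 : ε * ⟪bd η, σ⟫ ≤ |⟪bd η, σ⟫| := by
      calc ε * ⟪bd η, σ⟫ ≤ |ε * ⟪bd η, σ⟫| := le_abs_self _
        _ = |⟪bd η, σ⟫| := by
          rw [abs_mul]
          rcases hε with h | h <;> simp [h]
    have h3 : ∑ τ' ∈ Finset.univ.erase η, ε * lam τ' * ⟪bd η, bd τ'⟫
        ≤ ∑ τ' ∈ Finset.univ.erase η, |⟪bd η, bd τ'⟫| := by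
      apply Finset.sum_le_sum
      intro τ' _
      have habs : |ε * lam τ' * ⟪bd η, bd τ'⟫| ≤ |⟪bd η, bd τ'⟫| := by
        rw [abs_mul, abs_mul]
        have hεa : |ε| = 1 := by rcases hε with h | h <;> simp [h]
        have hl : |lam τ'| ≤ 1 := by
          rcases hlam τ' with h | h | h <;> simp_all
        rw [hεa, one_mul]
        exact mul_le_of_le_one_left (abs_nonneg _) hl
      exact (le_abs_self _).trans habs
    have := hdeg η
    linarith [hcalc ▸ hjump]
  refine ⟨Function.update lam η (lam η - ε), ?_, ?_⟩
  · intro τ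
    by_cases h : τ = η
    · subst h
      rw [Function.update_self]
      rcases hlam τ with h | h | h <;> rcases hε with h' | h' <;>
        simp_all [sub_eq_iff_eq_add]
    · rw [Function.update_of_ne h]; exact hlam τ
  · rw [hX0]
    have : ∀ τ, Function.update lam η (lam η - ε) τ • bd τ
        = lam τ • bd τ - (if τ = η then ε • bd η else 0) := by
      intro τ
      by_cases h : τ = η
      · subst h; rw [Function.update_self, sub_smul]; simp
      · rw [Function.update_of_ne h]; simp [h]
    rw [Finset.sum_congr rfl (fun τ _ => this τ), Finset.sum_sub_distrib,
      Finset.sum_ite_eq' Finset.univ η (fun _ => ε • bd η)]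
    simp
    abel
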